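/- arXiv:2211.04848 — 2 statements merged into one kernel-verified Lean document; each statement's English description precedes it below -/
import Mathlib

section
/- Let Γ = (V,E) be a finite connected G-locally arc-transitive graph for some G ≤ Aut(Γ), let {α,β} ∈ E, and let N be a normal subgroup of G. Suppose gcd(|N_α|, |Γ(α)|) = 1 and gcd(|N_β|, |Γ(β)|) = 1. Then N is semiregular on V. -/
def IsAutGroup {V : Type*} (Γ : SimpleGraph V) (G : Subgroup (Equiv.Perm V)) : Prop :=
  ∀ g ∈ G, ∀ u v : V, Γ.Adj u v → Γ.Adj (g u) (g v)

def stabOf {V : Type*} (G : Subgroup (Equiv.Perm V)) (α : V) : Subgroup (Equiv.Perm V) :=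
  G ⊓ MulAction.stabilizer (Equiv.Perm V) α

def TransOn {V : Type*} (H : Subgroup (Equiv.Perm V)) (S : Set V) : Prop :=
  ∀ x ∈ S, ∀ y ∈ S, ∃ g ∈ H, g x = y

def NormalIn {W : Type*} [Group W] (N H : Subgroup W) : Prop :=
  N ≤ H ∧ ∀ h ∈ H, ∀ x ∈ N, h * x * h⁻¹ ∈ N

/-!
The orbits of a normal subgroup of a transitive group are blocks, so their size divides both
the order of the subgroup and the degree. Since `N_γ` is normal in `G_γ`, which is transitive
on `Γ(γ)`, coprimality forces `N_γ` to fix `Γ(γ)` pointwise, i.e. `N_γ ≤ N_δ` for every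
neighbour `δ` of `γ`. Local arc-transitivity and connectedness make every vertex a `G`-image of
`α` or `β`, and the coprimality conditions are `G`-invariant, so they hold at every vertex; by
connectedness `N_γ` then fixes every vertex.
-/

theorem SimpleGraph.Preconnected.induction {V : Type*} {Γ : SimpleGraph V} (hΓ : Γ.Preconnected)
    {P : V → Prop} {a : V} (ha : P a) (hadj : ∀ u v, Γ.Adj u v → P u → P v) (v : V) : P v := by
  obtain ⟨w⟩ := hΓ a v
  induction w with
  | nil => exact ha
  | cons h _ ih => exact ih (hadj _ _ h ha)

namespace MulAction

variable {H X : Type*} [Group H] [MulAction H X] [IsPretransitive H X]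

theorem smul_eq_self_of_normal_of_coprime {N : Subgroup H} [N.Normal]
    (hcop : Nat.gcd (Nat.card N) (Nat.card X) = 1) (n : N) (x : X) : n • x = x := by
  have hN : (orbit N x).ncard ∣ Nat.card N := index_stabilizer N x ▸ Subgroup.index_dvd_card _
  have hX : (orbit N x).ncard ∣ Nat.card X :=
    (IsBlock.orbit_of_normal x).ncard_dvd_card ⟨x, mem_orbit_self x⟩
  obtain ⟨y, hy⟩ := Set.ncard_eq_one.mp (Nat.eq_one_of_dvd_one (hcop ▸ Nat.dvd_gcd hN hX))
  have hx : x ∈ orbit N x := mem_orbit_self x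
  have hnx : n • x ∈ orbit N x := mem_orbit x n
  rw [hy, Set.mem_singleton_iff] at hx hnx
  rw [hnx, hx]

end MulAction

section

variable {V : Type*} {Γ : SimpleGraph V} {G N : Subgroup (Equiv.Perm V)}

theorem mem_stabOf {α : V} {g : Equiv.Perm V} : g ∈ stabOf G α ↔ g ∈ G ∧ g α = α := by
  simp [stabOf, Subgroup.mem_inf, MulAction.mem_stabilizer_iff, Equiv.Perm.smul_def]

namespace IsAutGroup

theorem adj_apply_iff (hG : IsAutGroup Γ G) {g : Equiv.Perm V} (hg : g ∈ G) {u v : V} :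
    Γ.Adj (g u) (g v) ↔ Γ.Adj u v :=
  ⟨fun h => by simpa using hG g⁻¹ (inv_mem hg) _ _ h, hG g hg u v⟩

theorem neighborSet_apply (hG : IsAutGroup Γ G) {g : Equiv.Perm V} (hg : g ∈ G) (x : V) :
    Γ.neighborSet (g x) = g '' Γ.neighborSet x := by
  ext v
  rw [← g.apply_symm_apply v, Set.mem_image_equiv, SimpleGraph.mem_neighborSet,
    SimpleGraph.mem_neighborSet, hG.adj_apply_iff hg, g.symm_apply_apply]

theorem ncard_neighborSet_apply (hG : IsAutGroup Γ G) {g : Equiv.Perm V} (hg : g ∈ G) (x : V) :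
    (Γ.neighborSet (g x)).ncard = (Γ.neighborSet x).ncard := by
  rw [hG.neighborSet_apply hg, Set.ncard_image_of_injective _ g.injective]

def neighborSubMulAction (hG : IsAutGroup Γ G) (γ : V) : SubMulAction (stabOf G γ) V where
  carrier := Γ.neighborSet γ
  smul_mem' g v hv := by
    obtain ⟨hgG, hgγ⟩ := mem_stabOf.mp g.2
    have := hG g hgG γ v hv
    rwa [hgγ] at this

theorem isPretransitive_neighborSubMulAction (hG : IsAutGroup Γ G) {γ : V}
    (hγ : TransOn (stabOf G γ) (Γ.neighborSet γ)) :
    MulAction.IsPretransitive (stabOf G γ) (hG.neighborSubMulAction γ) where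
  exists_smul_eq u v := by
    obtain ⟨g, hg, hgu⟩ := hγ u u.2 v v.2
    exact ⟨⟨g, hg⟩, Subtype.ext hgu⟩

theorem exists_apply_eq_or_apply_eq (hG : IsAutGroup Γ G) (hconn : Γ.Connected)
    (hlocal : ∀ γ : V, TransOn (stabOf G γ) (Γ.neighborSet γ)) {α β : V} (hadj : Γ.Adj α β)
    (γ : V) : ∃ g ∈ G, g α = γ ∨ g β = γ := by
  refine hconn.preconnected.induction (P := fun γ => ∃ g ∈ G, g α = γ ∨ g β = γ)
    ⟨1, one_mem G, .inl rfl⟩ ?_ γ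
  rintro u v huv ⟨g, hg, hgu | hgu⟩
  · have hv : Γ.Adj α (g⁻¹ v) := by
      rwa [← hG.adj_apply_iff hg, hgu, Equiv.Perm.inv_def, Equiv.apply_symm_apply]
    obtain ⟨h, hh, hhβ⟩ := hlocal α β hadj (g⁻¹ v) hv
    exact ⟨g * h, mul_mem hg (mem_stabOf.mp hh).1, .inr (by simp [hhβ])⟩
  · have hv : Γ.Adj β (g⁻¹ v) := by
      rwa [← hG.adj_apply_iff hg, hgu, Equiv.Perm.inv_def, Equiv.apply_symm_apply]
    obtain ⟨h, hh, hhα⟩ := hlocal β α hadj.symm (g⁻¹ v) hv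
    exact ⟨g * h, mul_mem hg (mem_stabOf.mp hh).1, .inl (by simp [hhα])⟩

end IsAutGroup

namespace NormalIn

theorem conj_mem_stabOf_iff (hN : NormalIn N G) {g : Equiv.Perm V} (hg : g ∈ G) {x : V}
    {n : Equiv.Perm V} : g * n * g⁻¹ ∈ stabOf N (g x) ↔ n ∈ stabOf N x := by
  simp only [mem_stabOf, Equiv.Perm.mul_apply, Equiv.Perm.inv_def, Equiv.symm_apply_apply,
    EmbeddingLike.apply_eq_iff_eq]
  refine and_congr_left' ⟨fun h => ?_, hN.2 g hg n⟩
  simpa [mul_assoc, ← Equiv.Perm.inv_def] using hN.2 g⁻¹ (inv_mem hg) _ h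

theorem card_stabOf_apply (hN : NormalIn N G) {g : Equiv.Perm V} (hg : g ∈ G) (x : V) :
    Nat.card (stabOf N (g x)) = Nat.card (stabOf N x) :=
  (Nat.card_congr <| (MulAut.conj g).toEquiv.subtypeEquiv fun _ =>
    (hN.conj_mem_stabOf_iff hg).symm).symm

theorem stabOf_subgroupOf_normal (hN : NormalIn N G) (γ : V) :
    ((stabOf N γ).subgroupOf (stabOf G γ)).Normal where
  conj_mem n hn g := by
    rw [Subgroup.mem_subgroupOf] at hn ⊢
    obtain ⟨hgG, hgγ⟩ := mem_stabOf.mp g.2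
    have := (hN.conj_mem_stabOf_iff hgG (x := γ)).mpr hn
    rwa [hgγ] at this

end NormalIn

theorem apply_eq_of_mem_stabOf_of_adj (hG : IsAutGroup Γ G) (hN : NormalIn N G) {γ δ : V}
    (hγ : TransOn (stabOf G γ) (Γ.neighborSet γ))
    (hcop : Nat.gcd (Nat.card (stabOf N γ)) (Γ.neighborSet γ).ncard = 1)
    {n : Equiv.Perm V} (hn : n ∈ stabOf N γ) (hδ : Γ.Adj γ δ) : n δ = δ := by
  have := hG.isPretransitive_neighborSubMulAction hγ
  have := hN.stabOf_subgroupOf_normal γ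
  have hNγ : stabOf N γ ≤ stabOf G γ := inf_le_inf_right _ hN.1
  have hcard : Nat.card ((stabOf N γ).subgroupOf (stabOf G γ)) = Nat.card (stabOf N γ) :=
    Nat.card_congr (Subgroup.subgroupOfEquivOfLe hNγ).toEquiv
  have hcop' : Nat.gcd (Nat.card ((stabOf N γ).subgroupOf (stabOf G γ)))
      (Nat.card (hG.neighborSubMulAction γ)) = 1 := by
    rw [hcard]
    exact (Nat.card_coe_set_eq (Γ.neighborSet γ)).symm ▸ hcop
  have := MulAction.smul_eq_self_of_normal_of_coprime hcop'
    ⟨⟨n, hNγ hn⟩, Subgroup.mem_subgroupOf.mpr hn⟩ ⟨δ, hδ⟩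
  exact congrArg Subtype.val this

end

theorem stmt_5_general {V : Type*} (Γ : SimpleGraph V)
    (G N : Subgroup (Equiv.Perm V)) (α β : V)
    (hconn : Γ.Connected) (hG : IsAutGroup Γ G)
    (hlocal : ∀ γ : V, TransOn (stabOf G γ) (Γ.neighborSet γ))
    (hadj : Γ.Adj α β) (hN : NormalIn N G)
    (hα : Nat.gcd (Nat.card ↥(stabOf N α)) ((Γ.neighborSet α).ncard) = 1)
    (hβ : Nat.gcd (Nat.card ↥(stabOf N β)) ((Γ.neighborSet β).ncard) = 1) :
    ∀ γ : V, stabOf N γ = ⊥ := by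
  have hcop : ∀ γ, Nat.gcd (Nat.card (stabOf N γ)) (Γ.neighborSet γ).ncard = 1 := by
    intro γ
    obtain ⟨g, hg, rfl | rfl⟩ := hG.exists_apply_eq_or_apply_eq hconn hlocal hadj γ
    · rwa [hN.card_stabOf_apply hg, hG.ncard_neighborSet_apply hg]
    · rwa [hN.card_stabOf_apply hg, hG.ncard_neighborSet_apply hg]
  intro γ
  refine (Subgroup.eq_bot_iff_forall _).mpr fun n hn => Equiv.ext fun v => ?_
  have hstep (u w : V) (huw : Γ.Adj u w) (hu : n ∈ stabOf N u) : n ∈ stabOf N w :=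
    mem_stabOf.mpr ⟨(mem_stabOf.mp hu).1,
      apply_eq_of_mem_stabOf_of_adj hG hN (hlocal u) (hcop u) hu huw⟩
  exact (mem_stabOf.mp (hconn.preconnected.induction hn hstep v)).2

/-- **Lemma 2.4 (tech-5).** Let `Γ` be a finite connected `G`-locally arc-transitive graph,
`{α,β}` an edge and `N ⊴ G`. If `gcd(|N_α|, |Γ(α)|) = 1 = gcd(|N_β|, |Γ(β)|)`, then `N` is
semiregular on `V`. -/
theorem stmt_5 {V : Type*} [Finite V] (Γ : SimpleGraph V)
    (G N : Subgroup (Equiv.Perm V)) (α β : V)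
    (hconn : Γ.Connected) (hG : IsAutGroup Γ G)
    (hlocal : ∀ γ : V, TransOn (stabOf G γ) (Γ.neighborSet γ))
    (hadj : Γ.Adj α β) (hN : NormalIn N G)
    (hα : Nat.gcd (Nat.card ↥(stabOf N α)) ((Γ.neighborSet α).ncard) = 1)
    (hβ : Nat.gcd (Nat.card ↥(stabOf N β)) ((Γ.neighborSet β).ncard) = 1) :
    ∀ γ : V, stabOf N γ = ⊥ :=
  stmt_5_general Γ G N α β hconn hG hlocal hadj hN hα hβ
end

section
/- Under the PA setup, assume in addition that Γ is M-locally primitive, i.e., for every vertex γ the stabilizer M_γ acts primitively on Γ(γ). Then every coordinate projection π_i : M_α → R_i (1 ≤ i ≤ n) is injective; in particular M_α is isomorphic to R_i for every i. -/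
def IsBlockOn {V : Type*} (H : Subgroup (Equiv.Perm V)) (S B : Set V) : Prop :=
  B ⊆ S ∧ ∀ g ∈ H, (⇑g '' B) = B ∨ Disjoint (⇑g '' B) B

def PrimOn {V : Type*} (H : Subgroup (Equiv.Perm V)) (S : Set V) : Prop :=
  TransOn H S ∧ ∀ B : Set V, IsBlockOn H S B → B.Subsingleton ∨ B = S

def orbitOf {V : Type*} (H : Subgroup (Equiv.Perm V)) (γ : V) : Set V :=
  {v | ∃ g ∈ H, g γ = v}

def TwoArcTrans {V : Type*} (Γ : SimpleGraph V) (G : Subgroup (Equiv.Perm V)) : Prop :=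
  ∀ a b c a' b' c' : V, Γ.Adj a b → Γ.Adj b c → a ≠ c →
    Γ.Adj a' b' → Γ.Adj b' c' → a' ≠ c' →
    ∃ g ∈ G, g a = a' ∧ g b = b' ∧ g c = c'

/-- The ordered product of one element from each of the subgroups `T i`. -/
def prodOf {W : Type*} [Group W] {n : ℕ} (T : Fin n → Subgroup W)
    (f : (i : Fin n) → ↥(T i)) : W :=
  (List.ofFn fun i => ((f i : W))).prod

/-!
Write `N_k = M ∩ C(T_k)` for the kernel of the projection `π_k`. As `N_k` is normal in `M`, the
stabiliser `(N_k)_γ` is normal in `M_γ`, so local primitivity makes it trivial or transitive on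
`Γ(γ)`. If it is trivial on every `Γ(γ)`, an element of `(N_k)_α` fixes the neighbours of each
vertex it fixes, hence every vertex: `ker π_k ∩ M_α = 1`, which is the claim.

Transitivity on some `Γ(γ)` is impossible. Conjugating by `M` and, if needed, by an element
of `G` mapping `α` to `β` (which permutes the factors `T_i`), it would hold at `β` for some `k`,
and then on `Γ(δ)` for every `δ ∈ β^M`. Walking through the graph, every vertex then lies in
`N_k α` or has all its neighbours there. Since `T_k` centralises `N_k`, this makes
`{t ∈ T_k | tα ∈ N_k α}` a subgroup of index at most two of the simple nonabelian group `T_k`.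
Hence `T_k α ⊆ N_k α`, i.e. `T_k ⊆ N_k M_α`, and `T_k = π_k(M_α) ≤ R_k`, contradicting
`R_k < T_k`.
-/

open Subgroup

section SimpleGroup

variable {H : Type*} [Group H] [IsSimpleGroup H]

theorem IsSimpleGroup.center_eq_bot (hnc : ∃ a b : H, a * b ≠ b * a) : center H = ⊥ := by
  refine (IsSimpleGroup.eq_bot_or_eq_top_of_normal _ inferInstance).resolve_right fun htop => ?_
  obtain ⟨a, b, hab⟩ := hnc
  exact hab (mem_center_iff.mp (htop ▸ mem_top a) b).symm

/-- A subgroup of index at most two in a simple nonabelian group is the whole group. -/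
theorem IsSimpleGroup.eq_top_of_mul_mem (hnc : ∃ a b : H, a * b ≠ b * a) (K : Subgroup H)
    (hK : ∀ a b, a ∉ K → b ∉ K → a * b ∈ K) : K = ⊤ := by
  have hnormal : K.Normal := ⟨fun k hk g => by
    by_cases hg : g ∈ K
    · exact K.mul_mem (K.mul_mem hg hk) (K.inv_mem hg)
    · refine hK _ _ (fun h => hg ?_) (fun h => hg (by simpa using K.inv_mem h))
      simpa using K.mul_mem h (K.inv_mem hk)⟩
  refine (IsSimpleGroup.eq_bot_or_eq_top_of_normal K hnormal).resolve_left fun hbot => ?_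
  obtain ⟨a, b, hab⟩ := hnc
  have hone : ∀ x y : H, x ≠ 1 → y ≠ 1 → x * y = 1 := fun x y hx hy => by
    simpa [hbot] using hK x y (by simpa [hbot]) (by simpa [hbot])
  by_cases ha : a = 1
  · simp [ha] at hab
  by_cases hb : b = 1
  · simp [hb] at hab
  exact hab ((hone a b ha hb).trans (hone b a hb ha).symm)

end SimpleGroup

theorem conj_mem_inf_centralizer {W : Type*} [Group W] {M A B : Subgroup W} {g x : W}
    (hgM : ∀ m ∈ M, g * m * g⁻¹ ∈ M) (hgB : ∀ b ∈ B, g⁻¹ * b * g ∈ A)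
    (hx : x ∈ M ⊓ centralizer A) : g * x * g⁻¹ ∈ M ⊓ centralizer B := by
  refine ⟨hgM x hx.1, mem_centralizer_iff.mpr fun b hb => ?_⟩
  have hcomm := mem_centralizer_iff.mp hx.2 _ (hgB b hb)
  calc b * (g * x * g⁻¹) = g * ((g⁻¹ * b * g) * x) * g⁻¹ := by group
    _ = g * (x * (g⁻¹ * b * g)) * g⁻¹ := by rw [hcomm]
    _ = g * x * g⁻¹ * b := by group

section InternalProduct

variable {W : Type*} [Group W] {n : ℕ} {T : Fin n → Subgroup W}

theorem prodOf_mem {K : Subgroup W} {f : (i : Fin n) → T i} (h : ∀ i, (f i : W) ∈ K) :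
    prodOf T f ∈ K :=
  list_prod_mem fun _ hx => by
    obtain ⟨i, rfl⟩ := List.mem_ofFn.mp hx
    exact h i

theorem prodOf_one : prodOf T 1 = 1 :=
  List.prod_eq_one fun _ hx => by
    obtain ⟨i, rfl⟩ := List.mem_ofFn.mp hx
    rfl

theorem prodOf_mul (hc : ∀ i j, i ≠ j → ∀ x ∈ T i, ∀ y ∈ T j, x * y = y * x)
    (f g : (i : Fin n) → T i) : prodOf T (f * g) = prodOf T f * prodOf T g := by
  induction n with
  | zero => simp [prodOf]
  | succ m ih =>
    have hcomm : Commute (g 0 : W) (List.ofFn fun i : Fin m => (f i.succ : W)).prod :=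
      Commute.list_prod_right _ _ fun x hx => by
        obtain ⟨i, rfl⟩ := List.mem_ofFn.mp hx
        exact hc 0 i.succ (Fin.succ_ne_zero i).symm _ (g 0).2 _ (f i.succ).2
    have htail := ih (T := fun i => T i.succ)
      (fun i j hij => hc i.succ j.succ (Fin.succ_injective _ |>.ne hij))
      (fun i => f i.succ) (fun i => g i.succ)
    simp only [prodOf, List.ofFn_succ, List.prod_cons, Pi.mul_apply, coe_mul] at htail ⊢
    rw [htail, mul_assoc, ← mul_assoc (g 0 : W), hcomm.eq]
    group

theorem List.prod_ofFn_eq_of_eq_one {M : Type*} [Monoid M] :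
    ∀ {n : ℕ} {h : Fin n → M} (k : Fin n), (∀ j ≠ k, h j = 1) → (List.ofFn h).prod = h k
  | 0, _, k, _ => k.elim0
  | m + 1, h, k, hk => by
    rw [List.ofFn_succ, List.prod_cons]
    cases k using Fin.cases with
    | zero =>
      rw [List.prod_eq_one, mul_one]
      intro x hx
      obtain ⟨i, rfl⟩ := List.mem_ofFn.mp hx
      exact hk _ (Fin.succ_ne_zero i)
    | succ k =>
      rw [hk 0 (Fin.succ_ne_zero k).symm, one_mul]
      exact List.prod_ofFn_eq_of_eq_one k fun j hj => hk _ (Fin.succ_injective _ |>.ne hj)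

theorem prodOf_mulSingle (k : Fin n) (x : T k) : prodOf T (Pi.mulSingle k x) = x := by
  rw [prodOf, List.prod_ofFn_eq_of_eq_one k fun j hj => by simp [Pi.mulSingle_eq_of_ne hj]]
  simp

def prodOfHom (hc : ∀ i j, i ≠ j → ∀ x ∈ T i, ∀ y ∈ T j, x * y = y * x) :
    ((i : Fin n) → T i) →* W where
  toFun := prodOf T
  map_one' := prodOf_one
  map_mul' := prodOf_mul hc

end InternalProduct

structure IsInternalProduct {W : Type*} [Group W] {n : ℕ} (M : Subgroup W)
    (T : Fin n → Subgroup W) : Prop where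
  le : ∀ i, T i ≤ M
  commute : ∀ i j, i ≠ j → ∀ x ∈ T i, ∀ y ∈ T j, x * y = y * x
  existsUnique : ∀ m ∈ M, ∃! f : (i : Fin n) → T i, m = prodOf T f

namespace IsInternalProduct

variable {W : Type*} [Group W] {n : ℕ} {T : Fin n → Subgroup W} {M : Subgroup W}
  (hM : IsInternalProduct M T)
include hM

theorem conj_mem {m t : W} {l : Fin n} (hm : m ∈ M) (ht : t ∈ T l) : m * t * m⁻¹ ∈ T l := by
  obtain ⟨f, rfl, -⟩ := hM.existsUnique m hm
  have : prodOf T f ∈ normalizer (T l : Set W) := prodOf_mem fun i => by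
    by_cases hi : i = l
    · subst hi
      exact le_normalizer (f i).2
    · exact centralizer_le_normalizer _ <| mem_centralizer_iff.mpr fun t ht =>
        hM.commute l i (Ne.symm hi) t ht _ (f i).2
  exact (mem_normalizer_iff.mp this t).mp ht

theorem mem_centralizer {x : W} (hx : ∀ i, x ∈ centralizer (T i)) : x ∈ centralizer M :=
  mem_centralizer_iff.mpr fun m hm => by
    obtain ⟨f, rfl, -⟩ := hM.existsUnique m hm
    have : prodOf T f ∈ centralizer {x} := prodOf_mem fun i =>
      mem_centralizer_singleton_iff.mpr (mem_centralizer_iff.mp (hx i) _ (f i).2)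
    exact mem_centralizer_singleton_iff.mp this

theorem exists_le_of_normal (hsimple : ∀ i, IsSimpleGroup (T i)) {S : Subgroup W}
    (hSM : S ≤ M) (hSnormal : ∀ m ∈ M, ∀ s ∈ S, m * s * m⁻¹ ∈ S)
    (hnc : ∃ a b : S, a * b ≠ b * a) : ∃ l, T l ≤ S := by
  by_contra! hnot
  -- `S ∩ T l` is normal in the simple group `T l`, hence trivial, and contains `[s, t]`
  have hcomm : ∀ s ∈ S, ∀ l, s ∈ centralizer (T l) := fun s hs l =>
    mem_centralizer_iff.mpr fun t ht => by
      have hnormal : (S.subgroupOf (T l)).Normal :=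
        ⟨fun p hp q => hSnormal _ (hM.le l q.2) _ hp⟩
      have hdisj : Disjoint S (T l) := subgroupOf_eq_bot.mp <|
        ((hsimple l).eq_bot_or_eq_top_of_normal _ hnormal).resolve_right
          fun htop => hnot l (subgroupOf_eq_top.mp htop)
      have hcomm : t * s * t⁻¹ * s⁻¹ = 1 := disjoint_def.mp hdisj
        (S.mul_mem (hSnormal t (hM.le l ht) s hs) (S.inv_mem hs))
        (by simpa [mul_assoc] using (T l).mul_mem ht (hM.conj_mem (hSM hs) ((T l).inv_mem ht)))
      rwa [mul_inv_eq_one, mul_inv_eq_iff_eq_mul] at hcomm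
  obtain ⟨a, b, hab⟩ := hnc
  exact hab <| Subtype.ext
    (mem_centralizer_iff.mp (hM.mem_centralizer (hcomm a a.2)) b (hSM b.2)).symm

theorem exists_conj_mem (hsimple : ∀ i, IsSimpleGroup (T i)) {g : W}
    (hg : ∀ m ∈ M, g * m * g⁻¹ ∈ M) (hg' : ∀ m ∈ M, g⁻¹ * m * g ∈ M) {k : Fin n}
    (hnc : ∃ a b : T k, a * b ≠ b * a) : ∃ l, ∀ t ∈ T l, g⁻¹ * t * g ∈ T k := by
  set S := (T k).map (MulAut.conj g).toMonoidHom
  have hconj : ∀ y ∈ T k, g * y * g⁻¹ ∈ S := fun y hy => ⟨y, hy, rfl⟩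
  have hSM : S ≤ M := by
    rintro _ ⟨y, hy, rfl⟩
    exact hg y (hM.le k hy)
  have hSnormal : ∀ m ∈ M, ∀ s ∈ S, m * s * m⁻¹ ∈ S := by
    rintro m hm _ ⟨y, hy, rfl⟩
    convert hconj _ (hM.conj_mem (hg' m hm) hy) using 1
    simp only [MulEquiv.coe_toMonoidHom, MulAut.conj_apply]
    group
  obtain ⟨a, b, hab⟩ := hnc
  obtain ⟨l, hl⟩ := hM.exists_le_of_normal hsimple hSM hSnormal
    ⟨⟨_, hconj a a.2⟩, ⟨_, hconj b b.2⟩, fun h => hab <| Subtype.ext <|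
      (MulAut.conj g).injective <| by
        simpa only [map_mul, MulAut.conj_apply, coe_mul] using congrArg Subtype.val h⟩
  refine ⟨l, fun t ht => ?_⟩
  obtain ⟨y, hy, rfl⟩ := hl ht
  simpa [mul_assoc] using hy

noncomputable def mulEquiv : ((i : Fin n) → T i) ≃* M :=
  MulEquiv.ofBijective
    ((prodOfHom hM.commute).codRestrict M fun f => prodOf_mem fun i => hM.le i (f i).2)
    ⟨fun f g h => (hM.existsUnique _ (prodOf_mem fun i => hM.le i (f i).2)).unique rfl
        (congrArg Subtype.val h),
      fun m => by
        obtain ⟨f, hf, -⟩ := hM.existsUnique m m.2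
        exact ⟨f, Subtype.ext hf.symm⟩⟩

/-- The coordinate projection `π_k : M → T_k`, with values in the ambient group. -/
noncomputable def coord (k : Fin n) : M →* W :=
  (T k).subtype.comp ((Pi.evalMonoidHom (fun i => T i) k).comp hM.mulEquiv.symm.toMonoidHom)

theorem coe_eq_prodOf (m : M) : (m : W) = prodOf T (hM.mulEquiv.symm m) :=
  (congrArg Subtype.val (hM.mulEquiv.apply_symm_apply m)).symm

theorem coord_eq {k : Fin n} {m : M} {f : (i : Fin n) → T i} (h : (m : W) = prodOf T f) :
    hM.coord k m = f k := by
  have : hM.mulEquiv.symm m = f := hM.mulEquiv.symm_apply_eq.mpr (Subtype.ext h)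
  simp [coord, this]

theorem coord_mem (k : Fin n) (m : M) : hM.coord k m ∈ T k :=
  (hM.mulEquiv.symm m k).2

theorem coord_of_mem {k : Fin n} {t : W} (ht : t ∈ T k) : hM.coord k ⟨t, hM.le k ht⟩ = t := by
  rw [hM.coord_eq (prodOf_mulSingle k ⟨t, ht⟩).symm, Pi.mulSingle_eq_same]

theorem coord_eq_one_iff {k : Fin n} (hsimple : IsSimpleGroup (T k))
    (hnc : ∃ a b : T k, a * b ≠ b * a) (m : M) :
    hM.coord k m = 1 ↔ (m : W) ∈ centralizer (T k) := by
  constructor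
  · intro h1
    rw [hM.coe_eq_prodOf m]
    refine prodOf_mem fun i => mem_centralizer_iff.mpr fun t ht => ?_
    by_cases hi : i = k
    · subst hi
      have : (hM.mulEquiv.symm m i : W) = 1 := h1
      rw [this, one_mul, mul_one]
    · exact hM.commute k i (Ne.symm hi) t ht _ (SetLike.coe_mem _)
  · intro hm
    have hcenter : (⟨hM.coord k m, hM.coord_mem k m⟩ : T k) ∈ center (T k) :=
      mem_center_iff.mpr fun t => Subtype.ext <| by
        have hcomm : (⟨t, hM.le k t.2⟩ : M) * m = m * ⟨t, hM.le k t.2⟩ :=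
          Subtype.ext (mem_centralizer_iff.mp hm t t.2)
        simpa [hM.coord_of_mem t.2] using congrArg (hM.coord k) hcomm
    rw [IsSimpleGroup.center_eq_bot hnc, mem_bot] at hcenter
    exact congrArg Subtype.val hcenter

theorem conj_mem_inf_centralizer {k : Fin n} {m u : W} (hm : m ∈ M)
    (hu : u ∈ M ⊓ centralizer (T k)) : m * u * m⁻¹ ∈ M ⊓ centralizer (T k) :=
  _root_.conj_mem_inf_centralizer (fun x hx => M.mul_mem (M.mul_mem hm hx) (M.inv_mem hm))
    (fun t ht => by simpa using hM.conj_mem (M.inv_mem hm) ht) hu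

theorem injective_coord_comp_inclusion {k : Fin n} (hsimple : IsSimpleGroup (T k))
    (hnc : ∃ a b : T k, a * b ≠ b * a) {A : Subgroup W} (hAM : A ≤ M)
    (hA : Disjoint A (centralizer (T k))) :
    Function.Injective ((hM.coord k).comp (inclusion hAM)) :=
  (injective_iff_map_eq_one _).mpr fun a ha => Subtype.ext <|
    disjoint_def.mp hA a.2 ((hM.coord_eq_one_iff hsimple hnc _).mp ha)

end IsInternalProduct

open Equiv SimpleGraph

section Graph

variable {V : Type*} {Γ : SimpleGraph V}

theorem SimpleGraph.Connected.forall_of_adj (hconn : Γ.Connected) {P : V → Prop} {a : V}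
    (ha : P a) (hstep : ∀ u v, Γ.Adj u v → P u → P v) (v : V) : P v := by
  induction (Γ.reachable_iff_reflTransGen a v).mp (hconn a v) with
  | refl => exact ha
  | tail _ hadj ih => exact hstep _ _ hadj ih

theorem IsAutGroup.mono {G H : Subgroup (Perm V)} (hG : IsAutGroup Γ G) (hH : H ≤ G) :
    IsAutGroup Γ H :=
  fun g hg => hG g (hH hg)

theorem IsAutGroup.adj_iff {G : Subgroup (Perm V)} (hG : IsAutGroup Γ G) {g : Perm V}
    (hg : g ∈ G) {u v : V} : Γ.Adj (g u) (g v) ↔ Γ.Adj u v :=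
  ⟨fun h => by simpa using hG g⁻¹ (G.inv_mem hg) _ _ h, hG g hg u v⟩

theorem mem_stabOf_s9 {H : Subgroup (Perm V)} {γ : V} {x : Perm V} :
    x ∈ stabOf H γ ↔ x ∈ H ∧ x γ = γ :=
  Iff.rfl

theorem mem_orbitOf_self (H : Subgroup (Perm V)) (γ : V) : γ ∈ orbitOf H γ :=
  ⟨1, H.one_mem, rfl⟩

theorem orbitOf_eq_of_mem {H : Subgroup (Perm V)} {γ δ : V} (h : δ ∈ orbitOf H γ) :
    orbitOf H δ = orbitOf H γ := by
  obtain ⟨g, hg, rfl⟩ := h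
  ext v
  exact ⟨fun ⟨a, ha, hav⟩ => ⟨a * g, H.mul_mem ha hg, hav⟩,
    fun ⟨a, ha, hav⟩ => ⟨a * g⁻¹, H.mul_mem ha (H.inv_mem hg), by simpa using hav⟩⟩

theorem orbitOf_eq_or_disjoint (H : Subgroup (Perm V)) (γ δ : V) :
    orbitOf H γ = orbitOf H δ ∨ Disjoint (orbitOf H γ) (orbitOf H δ) := by
  refine or_iff_not_imp_right.mpr fun h => ?_
  obtain ⟨v, hγ, hδ⟩ := Set.not_disjoint_iff.mp h
  rw [← orbitOf_eq_of_mem hγ, orbitOf_eq_of_mem hδ]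

theorem image_orbitOf {N : Subgroup (Perm V)} {g : Perm V} (hg : ∀ u ∈ N, g * u * g⁻¹ ∈ N)
    (hg' : ∀ u ∈ N, g⁻¹ * u * g ∈ N) (γ : V) : g '' orbitOf N γ = orbitOf N (g γ) := by
  ext v
  constructor
  · rintro ⟨_, ⟨u, hu, rfl⟩, rfl⟩
    exact ⟨g * u * g⁻¹, hg u hu, by simp⟩
  · rintro ⟨u, hu, rfl⟩
    exact ⟨(g⁻¹ * u * g) γ, ⟨_, hg' u hu, rfl⟩, by simp⟩

theorem TransOn.mono {H K : Subgroup (Perm V)} {S : Set V} (h : TransOn H S) (hHK : H ≤ K) :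
    TransOn K S := fun x hx y hy =>
  let ⟨g, hg, hgx⟩ := h x hx y hy
  ⟨g, hHK hg, hgx⟩

theorem NormalIn.stabOf {N H : Subgroup (Perm V)} (hN : NormalIn N H) (γ : V) :
    NormalIn (stabOf N γ) (stabOf H γ) :=
  ⟨inf_le_inf_right _ hN.1, fun h hh x hx => by
    obtain ⟨hH, hhγ⟩ := mem_stabOf_s9.mp hh
    obtain ⟨hxN, hxγ⟩ := mem_stabOf_s9.mp hx
    have hh' : h⁻¹ γ = γ := Perm.inv_eq_iff_eq.mpr hhγ.symm
    exact mem_stabOf_s9.mpr ⟨hN.2 h hH x hxN, by simp only [Perm.mul_apply, hh', hxγ, hhγ]⟩⟩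

def FixesOn (H : Subgroup (Perm V)) (S : Set V) : Prop :=
  ∀ h ∈ H, ∀ x ∈ S, h x = x

/-- The orbits of a normal subgroup form a block system, so under a primitive group they are
either points or the whole set. -/
theorem PrimOn.fixesOn_or_transOn {H N : Subgroup (Perm V)} {S : Set V} (hprim : PrimOn H S)
    (hS : ∀ h ∈ H, ∀ x ∈ S, h x ∈ S) (hN : NormalIn N H) : FixesOn N S ∨ TransOn N S := by
  refine or_iff_not_imp_left.mpr fun hfix => ?_
  obtain ⟨u, hu, x, hx, hux⟩ : ∃ u ∈ N, ∃ x ∈ S, u x ≠ x := by simpa [FixesOn] using hfix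
  have hblock : IsBlockOn H S (orbitOf N x) := by
    refine ⟨?_, fun h hh => ?_⟩
    · rintro _ ⟨v, hv, rfl⟩
      exact hS v (hN.1 hv) x hx
    · rw [image_orbitOf (hN.2 h hh) fun v hv => by simpa using hN.2 h⁻¹ (H.inv_mem hh) v hv]
      exact orbitOf_eq_or_disjoint _ _ _
  rcases hprim.2 _ hblock with hsub | heq
  · exact absurd (hsub ⟨u, hu, rfl⟩ (mem_orbitOf_self N x)) hux
  · intro y hy z hz
    rw [← heq] at hy hz
    obtain ⟨a, ha, rfl⟩ := hy
    obtain ⟨b, hb, rfl⟩ := hz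
    exact ⟨b * a⁻¹, N.mul_mem hb (N.inv_mem ha), by simp⟩

theorem TransOn.stabOf_conj {G N N' : Subgroup (Perm V)} (hG : IsAutGroup Γ G) {g : Perm V}
    (hg : g ∈ G) (hN : ∀ u ∈ N, g * u * g⁻¹ ∈ N') {γ : V}
    (h : TransOn (stabOf N γ) (Γ.neighborSet γ)) :
    TransOn (stabOf N' (g γ)) (Γ.neighborSet (g γ)) := by
  have hnbr : ∀ x ∈ Γ.neighborSet (g γ), g⁻¹ x ∈ Γ.neighborSet γ := fun x hx => by
    rw [mem_neighborSet, ← hG.adj_iff hg]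
    simpa using hx
  intro x hx y hy
  obtain ⟨u, hu, hux⟩ := h _ (hnbr x hx) _ (hnbr y hy)
  obtain ⟨huN, huγ⟩ := mem_stabOf_s9.mp hu
  refine ⟨g * u * g⁻¹, mem_stabOf_s9.mpr ⟨hN u huN, by simp [huγ]⟩, ?_⟩
  rw [Perm.mul_apply, Perm.mul_apply, hux]
  simp

theorem adj_mem_orbitOf {M : Subgroup (Perm V)} (hM : IsAutGroup Γ M) {γ δ v x : V}
    (hloc : TransOn (stabOf M γ) (Γ.neighborSet γ)) (hγδ : Γ.Adj γ δ) (hv : v ∈ orbitOf M γ)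
    (hvx : Γ.Adj v x) : x ∈ orbitOf M δ := by
  obtain ⟨m, hm, rfl⟩ := hv
  obtain ⟨s, ⟨hsM, -⟩, hs⟩ := hloc δ hγδ (m⁻¹ x) <| by
    rw [mem_neighborSet, ← hM.adj_iff hm]
    simpa using hvx
  exact ⟨m * s, M.mul_mem hm hsM, by simp [hs]⟩

theorem mem_orbitOf_or_mem_orbitOf {M : Subgroup (Perm V)} (hconn : Γ.Connected)
    (hM : IsAutGroup Γ M) {α β : V} (hαβ : Γ.Adj α β)
    (hα : TransOn (stabOf M α) (Γ.neighborSet α)) (hβ : TransOn (stabOf M β) (Γ.neighborSet β))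
    (v : V) : v ∈ orbitOf M α ∨ v ∈ orbitOf M β := by
  refine hconn.forall_of_adj (P := fun v => v ∈ orbitOf M α ∨ v ∈ orbitOf M β)
    (Or.inl (mem_orbitOf_self M α)) (fun _ _ huv hu => ?_) v
  rcases hu with hu | hu
  · exact Or.inr (adj_mem_orbitOf hM hα hαβ hu huv)
  · exact Or.inl (adj_mem_orbitOf hM hβ hαβ.symm hu huv)

theorem TwoArcTrans.exists_apply_eq {G : Subgroup (Perm V)} (h2arc : TwoArcTrans Γ G)
    (hdeg : ∀ γ, 1 < (Γ.neighborSet γ).ncard) {α β : V} (hαβ : Γ.Adj α β) :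
    ∃ g ∈ G, g α = β := by
  obtain ⟨γ, hγ, hγβ⟩ := Set.exists_ne_of_one_lt_ncard (hdeg α) β
  obtain ⟨δ, hδ, hδα⟩ := Set.exists_ne_of_one_lt_ncard (hdeg β) α
  obtain ⟨g, hg, -, hgα, -⟩ := h2arc γ α β α β δ (Γ.adj_symm hγ) hαβ hγβ hαβ hδ hδα.symm
  exact ⟨g, hg, hgα⟩

theorem eq_one_of_fixes_adj (hconn : Γ.Connected) {h : Perm V} {α : V} (hα : h α = α)
    (hfix : ∀ v, h v = v → ∀ x, Γ.Adj v x → h x = x) : h = 1 :=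
  Equiv.ext (hconn.forall_of_adj hα fun u v huv hu => hfix u hu v huv)

end Graph

section LocalAction

variable {V : Type*} {Γ : SimpleGraph V}

theorem mem_orbitOf_or_neighborSet_subset (hconn : Γ.Connected) {N : Subgroup (Perm V)} {α : V}
    (hN : ∀ u ∈ orbitOf N α, ∀ v, Γ.Adj u v → TransOn N (Γ.neighborSet v)) (v : V) :
    v ∈ orbitOf N α ∨ Γ.neighborSet v ⊆ orbitOf N α := by
  refine hconn.forall_of_adj (P := fun v => v ∈ orbitOf N α ∨ Γ.neighborSet v ⊆ orbitOf N α)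
    (Or.inl (mem_orbitOf_self N α)) (fun u v huv hu => ?_) v
  rcases hu with hu | hu
  · exact Or.inr fun y hy => orbitOf_eq_of_mem hu ▸ hN u hu v huv u (Γ.adj_symm huv) y hy
  · exact Or.inl (hu huv)

/-- The elements of `T` mapping `α` into its `N`-orbit form a subgroup of index at most two. -/
theorem mem_orbitOf_of_commute {T N : Subgroup (Perm V)} [IsSimpleGroup T]
    (hnc : ∃ a b : T, a * b ≠ b * a) (hcomm : ∀ t ∈ T, ∀ u ∈ N, t * u = u * t) {α x : V}
    (h : ∀ t ∈ T, t α ∈ orbitOf N α ∨ t x ∈ orbitOf N α) {t : Perm V} (ht : t ∈ T) :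
    t α ∈ orbitOf N α := by
  have happly : ∀ t ∈ T, ∀ u ∈ N, ∀ y, t (u y) = u (t y) := fun t ht u hu y =>
    congrArg (· y) (hcomm t ht u hu)
  let K : Subgroup T :=
    { carrier := {t | (t : Perm V) α ∈ orbitOf N α}
      one_mem' := mem_orbitOf_self N α
      mul_mem' := by
        rintro t s ⟨u, hu, hut⟩ ⟨v, hv, hvs⟩
        refine ⟨v * u, N.mul_mem hv hu, ?_⟩
        simp only [coe_mul, Perm.mul_apply, ← hvs, ← hut, happly t t.2 v hv]
      inv_mem' := by
        rintro t ⟨u, hu, hut⟩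
        refine ⟨u⁻¹, N.inv_mem hu, ?_⟩
        rw [coe_inv, Perm.inv_eq_iff_eq, ← happly _ (T.inv_mem t.2) _ hu, hut]
        simp }
  have hK : ∀ a b, a ∉ K → b ∉ K → a * b ∈ K := by
    intro a b ha hb
    have hb' : b⁻¹ ∉ K := fun h => hb (by simpa using K.inv_mem h)
    obtain ⟨u, hu, hua⟩ := (h a a.2).resolve_left ha
    obtain ⟨v, hv, hvb⟩ := (h _ (T.inv_mem b.2)).resolve_left hb'
    -- `x = b v α = v b α`, so `a b α = v⁻¹ a x = v⁻¹ u α`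
    have hbα : (b : Perm V) α = v⁻¹ x := by
      rw [Perm.eq_inv_iff_eq, ← happly _ b.2 _ hv, hvb]
      simp
    refine ⟨v⁻¹ * u, N.mul_mem (N.inv_mem hv) hu, ?_⟩
    simp only [coe_mul, Perm.mul_apply, hbα, happly _ a.2 _ (N.inv_mem hv), hua]
  have htK : (⟨t, ht⟩ : T) ∈ K := IsSimpleGroup.eq_top_of_mul_mem hnc K hK ▸ mem_top _
  exact htK

theorem IsInternalProduct.le_of_forall_mem_orbitOf {n : ℕ} {M R : Subgroup (Perm V)}
    {T : Fin n → Subgroup (Perm V)} (hM : IsInternalProduct M T) {k : Fin n}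
    (hsimple : IsSimpleGroup (T k)) (hnc : ∃ a b : T k, a * b ≠ b * a) {α : V}
    (hR : ∀ m : M, (m : Perm V) ∈ stabOf M α → hM.coord k m ∈ R)
    (h : ∀ t ∈ T k, t α ∈ orbitOf (M ⊓ centralizer (T k)) α) : T k ≤ R := by
  intro t ht
  obtain ⟨u, hu, hut⟩ := h t ht
  have hu1 : hM.coord k ⟨u, hu.1⟩ = 1 := (hM.coord_eq_one_iff hsimple hnc _).mpr hu.2
  have hs : ((⟨u, hu.1⟩⁻¹ * ⟨t, hM.le k ht⟩ : M) : Perm V) ∈ stabOf M α :=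
    mem_stabOf_s9.mpr ⟨SetLike.coe_mem _, by simp [← hut]⟩
  simpa [hu1, hM.coord_of_mem ht] using hR _ hs

end LocalAction

section LocallyPrimitive

variable {V : Type*} {Γ : SimpleGraph V} {n : ℕ} {M : Subgroup (Perm V)}
  {T R : Fin n → Subgroup (Perm V)}

theorem IsInternalProduct.not_transOn_stabOf (hM : IsInternalProduct M T) (hconn : Γ.Connected)
    (hMaut : IsAutGroup Γ M) {α β : V} (hαβ : Γ.Adj α β)
    (hα : TransOn (stabOf M α) (Γ.neighborSet α)) {k : Fin n} (hsimple : IsSimpleGroup (T k))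
    (hnc : ∃ a b : T k, a * b ≠ b * a)
    (hR : ∀ m : M, (m : Perm V) ∈ stabOf M α → hM.coord k m ∈ R k) (hRT : ¬ T k ≤ R k) :
    ¬ TransOn (stabOf (M ⊓ centralizer (T k)) β) (Γ.neighborSet β) := by
  intro hβ
  have hadj : ∀ u ∈ orbitOf (M ⊓ centralizer (T k)) α, ∀ v, Γ.Adj u v →
      TransOn (M ⊓ centralizer (T k)) (Γ.neighborSet v) := by
    rintro _ ⟨a, ha, rfl⟩ v huv
    obtain ⟨m, hm, rfl⟩ := adj_mem_orbitOf hMaut hα hαβ ⟨a, ha.1, rfl⟩ huv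
    exact (hβ.stabOf_conj hMaut hm fun u hu => hM.conj_mem_inf_centralizer hm hu).mono inf_le_left
  refine hRT (hM.le_of_forall_mem_orbitOf hsimple hnc hR fun t ht => ?_)
  refine mem_orbitOf_of_commute (N := M ⊓ centralizer (T k)) hnc
    (fun t ht u hu => mem_centralizer_iff.mp hu.2 t ht) (x := β) (fun t ht => ?_) ht
  exact (mem_orbitOf_or_neighborSet_subset hconn hadj (t α)).imp_right
    fun h => h ((hMaut.adj_iff (hM.le k ht)).mpr hαβ)

theorem IsInternalProduct.disjoint_stabOf_centralizer (hM : IsInternalProduct M T)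
    (hconn : Γ.Connected) (hdeg : ∀ γ, 1 < (Γ.neighborSet γ).ncard) {G : Subgroup (Perm V)}
    (hG : IsAutGroup Γ G) (h2arc : TwoArcTrans Γ G) (hMG : NormalIn M G)
    (hsimple : ∀ i, IsSimpleGroup (T i)) (hnc : ∀ i, ∃ a b : T i, a * b ≠ b * a) {α β : V}
    (hαβ : Γ.Adj α β) (hR : ∀ k, ∀ m : M, (m : Perm V) ∈ stabOf M α → hM.coord k m ∈ R k)
    (hRT : ∀ k, ¬ T k ≤ R k) (hprim : ∀ γ, PrimOn (stabOf M γ) (Γ.neighborSet γ)) (k : Fin n) :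
    Disjoint (stabOf M α) (centralizer (T k)) := by
  have hMaut : IsAutGroup Γ M := hG.mono hMG.1
  have hnotβ : ∀ l, ¬ TransOn (stabOf (M ⊓ centralizer (T l)) β) (Γ.neighborSet β) := fun l =>
    hM.not_transOn_stabOf hconn hMaut hαβ (hprim α).1 (hsimple l) (hnc l) (hR l) (hRT l)
  -- `g ∈ G` with `g α = β` carries the kernel of `π_l` at `α` to that of some `π_k` at `β`
  have hnotα : ∀ l, ¬ TransOn (stabOf (M ⊓ centralizer (T l)) α) (Γ.neighborSet α) := by
    intro l hα
    obtain ⟨g, hg, hgα⟩ := h2arc.exists_apply_eq hdeg hαβ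
    obtain ⟨k, hk⟩ := hM.exists_conj_mem hsimple (hMG.2 g hg)
      (fun m hm => by simpa using hMG.2 g⁻¹ (G.inv_mem hg) m hm) (hnc l)
    exact hnotβ k (hgα ▸ hα.stabOf_conj hG hg fun u hu =>
      _root_.conj_mem_inf_centralizer (hMG.2 g hg) hk hu)
  have hfix : ∀ v, FixesOn (stabOf (M ⊓ centralizer (T k)) v) (Γ.neighborSet v) := by
    intro v
    have hmaps : ∀ h ∈ stabOf M v, ∀ x ∈ Γ.neighborSet v, h x ∈ Γ.neighborSet v :=
      fun h hh x hx => by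
        rw [mem_neighborSet, ← (mem_stabOf_s9.mp hh).2]
        exact hMaut h (mem_stabOf_s9.mp hh).1 v x hx
    have hnormal : NormalIn (stabOf (M ⊓ centralizer (T k)) v) (stabOf M v) :=
      NormalIn.stabOf ⟨inf_le_left, fun m hm u hu => hM.conj_mem_inf_centralizer hm hu⟩ v
    refine ((hprim v).fixesOn_or_transOn hmaps hnormal).resolve_right fun hv => ?_
    rcases mem_orbitOf_or_mem_orbitOf hconn hMaut hαβ (hprim α).1 (hprim β).1 v with
      ⟨m, hm, rfl⟩ | ⟨m, hm, rfl⟩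
    all_goals
      have hv' := hv.stabOf_conj hMaut (M.inv_mem hm) fun u hu =>
        hM.conj_mem_inf_centralizer (M.inv_mem hm) (by simpa using hu)
      simp only [Perm.inv_def, Equiv.symm_apply_apply] at hv'
    · exact hnotα k hv'
    · exact hnotβ k hv'
  refine disjoint_def.mpr fun {h} hh hc => ?_
  obtain ⟨hhM, hhα⟩ := mem_stabOf_s9.mp hh
  exact eq_one_of_fixes_adj hconn hhα fun v hv x hvx =>
    hfix v h (mem_stabOf_s9.mpr ⟨⟨hhM, hc⟩, hv⟩) x hvx

end LocallyPrimitive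

theorem stmt_9_general
    {V : Type*} (Γ : SimpleGraph V)
    (G M : Subgroup (Equiv.Perm V)) (α β : V)
    (n : ℕ) (T R : Fin n → Subgroup (Equiv.Perm V))
    (hconn : Γ.Connected)
    (hval : ∀ γ : V, 3 ≤ (Γ.neighborSet γ).ncard)
    (hG : IsAutGroup Γ G)
    (h2arc : TwoArcTrans Γ G)
    (hadj : Γ.Adj α β)
    (hMG : NormalIn M G)
    (hTsimple : ∀ i, IsSimpleGroup ↥(T i))
    (hTnonab : ∀ i, ∃ x ∈ T i, ∃ y ∈ T i, x * y ≠ y * x)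
    (hTM : ∀ i, T i ≤ M)
    (hTcomm : ∀ i j, i ≠ j → ∀ x ∈ T i, ∀ y ∈ T j, x * y = y * x)
    (hfact : ∀ m ∈ M, ∃! f : (i : Fin n) → ↥(T i), m = prodOf T f)
    (hRle : ∀ i, R i ≤ T i) (hRne : ∀ i, R i ≠ T i)
    (hMα : ∀ m ∈ stabOf M α, ∀ f : (i : Fin n) → ↥(T i),
      m = prodOf T f → ∀ i, ((f i : Equiv.Perm V)) ∈ R i)
    (hsurj : ∀ i, ∀ y ∈ R i, ∃ m ∈ stabOf M α, ∃ f : (i : Fin n) → ↥(T i),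
      m = prodOf T f ∧ ((f i : Equiv.Perm V)) = y)
    (hlocprim : ∀ γ : V, PrimOn (stabOf M γ) (Γ.neighborSet γ)) :
    (∀ i : Fin n, ∀ m ∈ stabOf M α, ∀ m' ∈ stabOf M α,
      ∀ f f' : (i : Fin n) → ↥(T i), m = prodOf T f → m' = prodOf T f' →
        f i = f' i → m = m') ∧
    (∀ i : Fin n, Nonempty (↥(stabOf M α) ≃* ↥(R i))) := by
  have hM : IsInternalProduct M T := ⟨hTM, hTcomm, hfact⟩
  have hnc : ∀ i, ∃ a b : T i, a * b ≠ b * a := fun i => by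
    obtain ⟨x, hx, y, hy, hxy⟩ := hTnonab i
    exact ⟨⟨x, hx⟩, ⟨y, hy⟩, fun h => hxy (congrArg Subtype.val h)⟩
  have hR : ∀ k, ∀ m : M, (m : Perm V) ∈ stabOf M α → hM.coord k m ∈ R k := fun k m hm =>
    hMα m hm _ (hM.coe_eq_prodOf m) k
  have hdisj := hM.disjoint_stabOf_centralizer hconn (fun γ => by linarith [hval γ]) hG h2arc hMG
    hTsimple hnc hadj hR (fun k h => hRne k (le_antisymm (hRle k) h)) hlocprim
  let π i := (hM.coord i).comp (inclusion (inf_le_left : stabOf M α ≤ M))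
  have hπ_inj i : Function.Injective (π i) :=
    hM.injective_coord_comp_inclusion (hTsimple i) (hnc i) _ (hdisj i)
  have hπ {i m} (hm : m ∈ stabOf M α) {f} (hf : m = prodOf T f) : π i ⟨m, hm⟩ = f i :=
    hM.coord_eq hf
  refine ⟨fun i m hm m' hm' f f' hf hf' hfi => ?_, fun i => ?_⟩
  · exact congrArg Subtype.val (hπ_inj i ((hπ hm hf).trans (hfi ▸ (hπ hm' hf').symm)))
  · refine ⟨(MonoidHom.ofInjective (hπ_inj i)).trans (MulEquiv.subgroupCongr ?_)⟩
    refine le_antisymm ?_ fun y hy => ?_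
    · rintro _ ⟨m, rfl⟩
      exact hR i _ m.2
    · obtain ⟨m, hm, f, hf, rfl⟩ := hsurj i y hy
      exact ⟨⟨m, hm⟩, hπ hm hf⟩

/-- **Lemma 4.2 (local-prim).** In the PA setup, if `Γ` is `M`-locally primitive then
every projection `π_i : M_α → R_i` is injective; in particular `M_α ≅ R_i` for all `i`. -/
theorem stmt_9
    {V : Type*} [Finite V] (Γ : SimpleGraph V)
    (G Gstar M : Subgroup (Equiv.Perm V)) (α β : V)
    (n : ℕ) (T R : Fin n → Subgroup (Equiv.Perm V))
    (hconn : Γ.Connected)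
    (hval : ∀ γ : V, 3 ≤ (Γ.neighborSet γ).ncard)
    (hG : IsAutGroup Γ G)
    (h2arc : TwoArcTrans Γ G)
    (hadj : Γ.Adj α β)
    (hGstar : Gstar = stabOf G α ⊔ stabOf G β)
    (hMGstar : NormalIn M Gstar)
    (hMG : NormalIn M G)
    (hMbot : M ≠ ⊥)
    (hMuniq : ∀ N : Subgroup (Equiv.Perm V), NormalIn N Gstar → N ≠ ⊥ → M ≤ N)
    (hn : 2 ≤ n)
    (hTsimple : ∀ i, IsSimpleGroup ↥(T i))
    (hTnonab : ∀ i, ∃ x ∈ T i, ∃ y ∈ T i, x * y ≠ y * x)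
    (hTiso : ∀ i j, Nonempty (↥(T i) ≃* ↥(T j)))
    (hTM : ∀ i, T i ≤ M)
    (hTcomm : ∀ i j, i ≠ j → ∀ x ∈ T i, ∀ y ∈ T j, x * y = y * x)
    (hfact : ∀ m ∈ M, ∃! f : (i : Fin n) → ↥(T i), m = prodOf T f)
    (hRbot : ∀ i, R i ≠ ⊥) (hRle : ∀ i, R i ≤ T i) (hRne : ∀ i, R i ≠ T i)
    (horb : ∀ γ : V, orbitOf M γ = orbitOf Gstar γ)
    (hMα : ∀ m ∈ stabOf M α, ∀ f : (i : Fin n) → ↥(T i),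
      m = prodOf T f → ∀ i, ((f i : Equiv.Perm V)) ∈ R i)
    (hsurj : ∀ i, ∀ y ∈ R i, ∃ m ∈ stabOf M α, ∃ f : (i : Fin n) → ↥(T i),
      m = prodOf T f ∧ ((f i : Equiv.Perm V)) = y)
    (hlocprim : ∀ γ : V, PrimOn (stabOf M γ) (Γ.neighborSet γ)) :
    (∀ i : Fin n, ∀ m ∈ stabOf M α, ∀ m' ∈ stabOf M α,
      ∀ f f' : (i : Fin n) → ↥(T i), m = prodOf T f → m' = prodOf T f' →
        f i = f' i → m = m') ∧
    (∀ i : Fin n, Nonempty (↥(stabOf M α) ≃* ↥(R i))) :=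
  stmt_9_general Γ G M α β n T R hconn hval hG h2arc hadj hMG hTsimple hTnonab hTM hTcomm hfact hRle
    hRne hMα hsurj hlocprim
end
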